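/- arXiv:0801.3710 — 2 statements merged into one kernel-verified Lean document; each statement's English description precedes it below -/
import Mathlib

section
/- Let T be a finite tree on vertex set V with vertex weights w : V → ℝ≥0, let v ∈ V, and let q be a neighbor of v. Then W(T(v,q)) ≥ rem(v); that is, the total weight of the connected component of v in the graph T with q deleted is at least rem(v). -/
/-- The graph `G` with vertex `v` deleted (as a graph on the same vertex set,
with `v` isolated): edges of `G` not incident to `v`. -/
def delVert {V : Type*} (G : SimpleGraph V) (v : V) : SimpleGraph V where
  Adj a b := G.Adj a b ∧ a ≠ v ∧ b ≠ v
  symm := ⟨fun _ _ h => ⟨h.1.symm, h.2.2, h.2.1⟩⟩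
  loopless := ⟨fun a h => G.loopless.irrefl a h.1⟩

open Classical in
/-- `compW G w u` is the total weight of the connected component of `u` in `G`. -/
noncomputable def compW {V : Type*} [Fintype V] (G : SimpleGraph V) (w : V → NNReal)
    (u : V) : NNReal :=
  ∑ x ∈ Finset.univ.filter (fun x => G.Reachable u x), w x

open Classical in
/-- `rem T w v = ∑_{u ∈ N(v)} W(T(u,v)) − max_{u ∈ N(v)} W(T(u,v)) + w v`,
the maximum being `0` when `N(v)` is empty. -/
noncomputable def rem {V : Type*} [Fintype V] (T : SimpleGraph V) (w : V → NNReal)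
    (v : V) : NNReal :=
  (∑ u ∈ Finset.univ.filter (fun u => T.Adj v u), compW (delVert T v) w u)
    - (Finset.univ.filter (fun u => T.Adj v u)).sup (fun u => compW (delVert T v) w u)
    + w v

/-! In a tree the branches `T(u, v)` at the neighbours `u` of `v` are pairwise disjoint, and every
branch other than the one at `q` lies, together with `v`, in the component of `v` in `T - q`.
Since the branch at `q` weighs at most the heaviest branch, `rem v` is bounded by the weight of
that component. -/

open Finset SimpleGraph

section delVert

variable {V : Type*} {G : SimpleGraph V}

lemma delVert_le (v : V) : delVert G v ≤ G :=
  fun _ _ h => h.1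

lemma SimpleGraph.Walk.not_mem_support_of_delVert {v a b : V} (p : (delVert G v).Walk a b)
    (ha : a ≠ v) : v ∉ p.support := by
  induction p with
  | nil => simpa using ha.symm
  | cons h _ ih => simpa [eq_comm] using ⟨ha.symm, ih h.2.2⟩

lemma SimpleGraph.Reachable.ne_of_delVert {v a b : V} (h : (delVert G v).Reachable a b)
    (ha : a ≠ v) : b ≠ v := by
  obtain ⟨p⟩ := h
  exact fun hb => p.not_mem_support_of_delVert ha (hb ▸ p.end_mem_support)

lemma SimpleGraph.Walk.reachable_delVert {q a b : V} (p : G.Walk a b) (hq : q ∉ p.support) :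
    (delVert G q).Reachable a b := by
  induction p with
  | nil => rfl
  | cons h p ih =>
    simp only [support_cons, List.mem_cons, not_or] at hq
    have hadj : (delVert G q).Adj _ _ :=
      ⟨h, Ne.symm hq.1, fun h' => hq.2 (h' ▸ p.start_mem_support)⟩
    exact hadj.reachable.trans (ih hq.2)

/-- The unique path between two neighbours `u, u'` of `v` in a forest passes through `v`. -/
lemma SimpleGraph.IsAcyclic.not_reachable_delVert [DecidableEq V] (hG : G.IsAcyclic)
    {v u u' : V} (hu : G.Adj v u) (hu' : G.Adj v u') (hne : u ≠ u') :
    ¬ (delVert G v).Reachable u u' := by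
  rintro ⟨p⟩
  have hv : v ∉ (p.mapLe (delVert_le v)).toPath.val.support := fun h =>
    p.not_mem_support_of_delVert hu.ne' <| by
      simpa using (p.mapLe (delVert_le v)).support_toPath_subset_support h
  have hpath : (Walk.cons hu.symm hu'.toWalk).IsPath := by
    simp [Walk.isPath_def, hu.ne', hne, hu'.ne]
  rw [(hG.subsingleton_path u u').elim (p.mapLe (delVert_le v)).toPath ⟨_, hpath⟩] at hv
  simp at hv

lemma SimpleGraph.IsAcyclic.reachable_delVert_of_adj [DecidableEq V] (hG : G.IsAcyclic)
    {v q u x : V} (hq : G.Adj v q) (hu : G.Adj v u) (huq : u ≠ q)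
    (hx : (delVert G v).Reachable u x) :
    (delVert G q).Reachable v x := by
  obtain ⟨p⟩ := hx
  have hqp : q ∉ p.support := fun h =>
    hG.not_reachable_delVert hu hq huq ⟨p.takeUntil q h⟩
  apply (Walk.cons hu (p.mapLe (delVert_le v))).reachable_delVert
  simpa [Walk.support_mapLe_eq_support] using ⟨hq.ne', hqp⟩

end delVert

section weights

variable {V : Type*} [Fintype V] (w : V → NNReal)

open Classical in
lemma sum_compW_le_of_pairwise_not_reachable {H : SimpleGraph V} {s C : Finset V}
    (hs : (s : Set V).Pairwise fun u u' => ¬ H.Reachable u u')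
    (hC : ∀ u ∈ s, ∀ x, H.Reachable u x → x ∈ C) :
    ∑ u ∈ s, compW H w u ≤ ∑ x ∈ C, w x := by
  have hdisj : (s : Set V).PairwiseDisjoint fun u => univ.filter (H.Reachable u) :=
    fun u hu u' hu' hne => disjoint_left.mpr fun x hx hx' =>
      hs hu hu' hne <| (mem_filter.mp hx).2.trans (mem_filter.mp hx').2.symm
  calc ∑ u ∈ s, compW H w u = ∑ x ∈ s.biUnion fun u => univ.filter (H.Reachable u), w x :=
        (sum_biUnion hdisj).symm
    _ ≤ ∑ x ∈ C, w x := by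
        refine sum_le_sum_of_subset fun x hx => ?_
        obtain ⟨u, hu, hx⟩ := mem_biUnion.mp hx
        exact hC u hu x (mem_filter.mp hx).2

open Classical in
lemma rem_le_sum_erase_add {T : SimpleGraph V} {v q : V} (hq : T.Adj v q) :
    rem T w v ≤ ∑ u ∈ (univ.filter (T.Adj v ·)).erase q, compW (delVert T v) w u + w v := by
  have hqN : q ∈ univ.filter (T.Adj v ·) := mem_filter.mpr ⟨mem_univ _, hq⟩
  unfold rem
  gcongr
  calc _ ≤ ∑ u ∈ univ.filter (T.Adj v ·), compW (delVert T v) w u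
          - compW (delVert T v) w q :=
        tsub_le_tsub_left (le_sup hqN) _
    _ = _ := by rw [← add_sum_erase _ _ hqN, add_tsub_cancel_left]

end weights

/-- in a tree `T`, for any neighbor `q` of `v`,
`W(T(v,q)) ≥ rem(v)`. -/
theorem weight_component_ge_rem
    {V : Type*} [Fintype V] (T : SimpleGraph V) (hT : T.IsTree)
    (w : V → NNReal) (v q : V) (hq : q ∈ T.neighborSet v) :
    rem T w v ≤ compW (delVert T q) w v := by
  classical
  have hvq : T.Adj v q := hq
  calc rem T w v
      ≤ ∑ u ∈ (univ.filter (T.Adj v ·)).erase q, compW (delVert T v) w u + w v :=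
        rem_le_sum_erase_add w hvq
    _ ≤ ∑ x ∈ (univ.filter ((delVert T q).Reachable v)).erase v, w x + w v := by
        gcongr
        refine sum_compW_le_of_pairwise_not_reachable w (fun u hu u' hu' hne => ?_) ?_
        · simp only [coe_erase, Set.mem_sdiff, mem_coe, mem_filter] at hu hu'
          exact hT.isAcyclic.not_reachable_delVert hu.1.2 hu'.1.2 hne
        · intro u hu x hx
          simp only [mem_erase, mem_filter] at hu
          refine mem_erase.mpr ⟨hx.ne_of_delVert hu.2.2.ne', ?_⟩
          refine mem_filter.mpr ⟨mem_univ _, ?_⟩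
          exact hT.isAcyclic.reachable_delVert_of_adj hvq hu.2.2 hu.1 hx
    _ = compW (delVert T q) w v := sum_erase_add _ _ (by simp)
end

section
/- Let T be a finite tree on vertex set V with vertex weights w : V → ℝ≥0. Let x ∈ V be a vertex with nonempty neighborhood N(x), let H be a simple graph on V all of whose edges join vertices of N(x) and whose restriction to N(x) is a tree, and let y ∈ N(x). Let T' be the graph on V \ {x} whose edge set is the edges of T not incident to x together with the edges of H, and define new weights w' by w'(y) = w(y) + w(x) and w'(u) = w(u) for u ≠ y. Then T' is a tree on V \ {x}, and for every vertex v ∈ V \ {x}, rem_{T',w'}(v) ≥ rem_{T,w}(v). -/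
/-- The healed graph: the edges of `T` not incident to `x`, together with the edges
of `H` (the vertex `x` becomes isolated). -/
def healGraph {V : Type*} (T : SimpleGraph V) (x : V) (H : SimpleGraph V) :
    SimpleGraph V where
  Adj a b := (T.Adj a b ∧ a ≠ x ∧ b ≠ x) ∨ H.Adj a b
  symm := ⟨fun _ _ h =>
    h.elim (fun h' => Or.inl ⟨h'.1.symm, h'.2.2, h'.2.1⟩) (fun h' => Or.inr h'.symm)⟩
  loopless := ⟨fun a h => h.elim (fun h' => T.loopless.irrefl a h'.1) (fun h' => H.loopless.irrefl a h')⟩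

/-!
On a tree, `rem v` is the total weight minus the heaviest branch at `v`, because the branches
at `v` partition the other vertices. Healing keeps the total weight, and every branch of the
healed tree at `v` lies inside a branch of `T` at `v`, which also contains `x` whenever the
former contains `y`; so the heaviest branch cannot get heavier.
-/

open SimpleGraph Finset

section Branches

variable {V : Type*} {G : SimpleGraph V} {v a b z : V}

lemma reachable_delVert_of_notMem_support (p : G.Walk a b) (hv : v ∉ p.support) :
    (delVert G v).Reachable a b := by
  induction p with
  | nil => rfl
  | cons h q ih =>
    rw [Walk.support_cons, List.mem_cons, not_or] at hv
    have hadj : (delVert G v).Adj _ _ :=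
      ⟨h, Ne.symm hv.1, fun hc => hv.2 (hc ▸ q.start_mem_support)⟩
    exact hadj.reachable.trans (ih hv.2)

lemma eq_of_reachable_delVert_self (h : (delVert G v).Reachable v z) : z = v := by
  obtain ⟨p⟩ := h
  cases p with
  | nil => rfl
  | cons h _ => exact absurd rfl h.2.1

lemma SimpleGraph.Connected.exists_adj_reachable_delVert (hG : G.Connected) (hz : z ≠ v) :
    ∃ u, G.Adj v u ∧ (delVert G v).Reachable u z := by
  classical
  obtain ⟨p, hp⟩ := (hG.preconnected v z).some.toPath
  cases p with
  | nil => exact absurd rfl hz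
  | cons h q =>
    rw [Walk.cons_isPath_iff] at hp
    exact ⟨_, h, reachable_delVert_of_notMem_support q hp.2⟩

/-- Two neighbours of `v` joined avoiding `v` would close a cycle through `v`. -/
lemma SimpleGraph.IsAcyclic.eq_of_adj_of_reachable_delVert (hG : G.IsAcyclic) {u₁ u₂ : V}
    (h₁ : G.Adj v u₁) (h₂ : G.Adj v u₂) (h : (delVert G v).Reachable u₁ u₂) : u₁ = u₂ := by
  by_contra hne
  have hbridge := isBridge_iff.mp (isAcyclic_iff_forall_adj_isBridge.mp hG h₁)
  refine hbridge (Adj.reachable ?_ |>.trans (h.symm.mono fun p q hpq => ?_))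
  · simp [h₂, h₁.ne, Ne.symm hne]
  · simp [hpq.1, hpq.2.1, hpq.2.2]

lemma SimpleGraph.Reachable.lift {W : Type*} {G' : SimpleGraph W} (f : V → W)
    (hf : ∀ a b, G.Adj a b → G'.Reachable (f a) (f b)) (h : G.Reachable a b) :
    G'.Reachable (f a) (f b) := by
  rw [reachable_iff_reflTransGen] at h ⊢
  exact Relation.ReflTransGen.lift' f (fun a b hab => (reachable_iff_reflTransGen _ _).mp
    (hf a b hab)) a b h

end Branches

section Weights

variable {V : Type*} [Fintype V] {G : SimpleGraph V} (w : V → NNReal) {v a b : V}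

lemma compW_eq_of_reachable (h : G.Reachable a b) : compW G w a = compW G w b := by
  unfold compW
  congr 1
  ext z
  simpa using ⟨h.symm.trans, h.trans⟩

open Classical in
lemma SimpleGraph.IsTree.sum_compW_delVert_add (hG : G.IsTree) :
    ∑ u ∈ univ.filter (G.Adj v), compW (delVert G v) w u + w v = ∑ z, w z := by
  have branch_iff : ∀ z, (∃ u ∈ univ.filter (G.Adj v), (delVert G v).Reachable u z) ↔ z ≠ v := by
    refine fun z => ⟨?_, fun hz => ?_⟩
    · rintro ⟨u, hu, huz⟩ rfl
      exact (mem_filter.mp hu).2.ne (eq_of_reachable_delVert_self huz.symm).symm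
    · obtain ⟨u, hu, huz⟩ := hG.connected.exists_adj_reachable_delVert hz
      exact ⟨u, mem_filter.mpr ⟨mem_univ u, hu⟩, huz⟩
  calc ∑ u ∈ univ.filter (G.Adj v), compW (delVert G v) w u + w v
      = ∑ z, (if z ≠ v then w z else 0) + w v := by
        simp only [compW, sum_filter (fun z => (delVert G v).Reachable _ z)]
        rw [sum_comm]
        congr 1
        refine sum_congr rfl fun z _ => ?_
        rw [sum_ite_zero _ _ (fun u₁ hu₁ u₂ hu₂ h₁ h₂ =>
          hG.isAcyclic.eq_of_adj_of_reachable_delVert (mem_filter.mp hu₁).2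
            (mem_filter.mp hu₂).2 (h₁.trans h₂.symm))]
        exact if_congr (branch_iff z) rfl rfl
    _ = ∑ z, w z := by
        rw [← sum_filter, filter_ne', sum_erase_add _ _ (mem_univ v)]

open Classical in
lemma SimpleGraph.IsTree.rem_eq (hG : G.IsTree) :
    rem G w v = ∑ z, w z
      - (univ.filter (G.Adj v)).sup (fun u => compW (delVert G v) w u) := by
  have hsup : (univ.filter (G.Adj v)).sup (fun u => compW (delVert G v) w u)
      ≤ ∑ u ∈ univ.filter (G.Adj v), compW (delVert G v) w u :=
    Finset.sup_le fun u hu => single_le_sum (fun _ _ => zero_le) hu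
  rw [rem, tsub_add_eq_add_tsub hsup, hG.sum_compW_delVert_add]

end Weights

section Transfer

variable {α M : Type*} [DecidableEq α] [AddCommMonoid M] (w : α → M) {x y : α} {A : Finset α}

lemma sum_update_add_eq_sum_insert (hx : x ∉ A) (hy : y ∈ A) :
    ∑ z ∈ A, Function.update w y (w y + w x) z = ∑ z ∈ insert x A, w z := by
  rw [sum_update_of_mem hy, sum_insert hx, ← add_sum_erase _ _ hy, sdiff_singleton_eq_erase]
  abel

lemma sum_update_add_le [PartialOrder M] [CanonicallyOrderedAdd M] {B : Finset α}
    (hAB : A ⊆ B) (hx : x ∉ A) (hxB : y ∈ A → x ∈ B) :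
    ∑ z ∈ A, Function.update w y (w y + w x) z ≤ ∑ z ∈ B, w z := by
  by_cases hy : y ∈ A
  · rw [sum_update_add_eq_sum_insert w hx hy]
    exact sum_le_sum_of_subset (insert_subset (hxB hy) hAB)
  · rw [sum_update_of_notMem hy]
    exact sum_le_sum_of_subset hAB

end Transfer

section Heal

variable {V : Type*} {T H : SimpleGraph V} {x : V}

lemma healGraph_induce_reachable_of_adj (hHconn : (H.induce (T.neighborSet x)).Connected)
    {a b : V} (ha : T.Adj x a) (hb : T.Adj x b) :
    ((healGraph T x H).induce ({x}ᶜ : Set V)).Reachable ⟨a, ha.ne'⟩ ⟨b, hb.ne'⟩ := by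
  let f : H.induce (T.neighborSet x) →g (healGraph T x H).induce ({x}ᶜ : Set V) :=
    { toFun := fun z => ⟨z, (z.2 : T.Adj x z).ne'⟩, map_rel' := Or.inr }
  exact (hHconn.preconnected ⟨a, ha⟩ ⟨b, hb⟩).map f

/-- A walk in `T` becomes a walk in the healed graph once `x` is replaced by any `y ∈ N(x)`. -/
lemma healGraph_induce_connected (hT : T.Connected)
    (hHconn : (H.induce (T.neighborSet x)).Connected) :
    ((healGraph T x H).induce ({x}ᶜ : Set V)).Connected := by
  classical
  obtain ⟨⟨y, hy⟩⟩ := hHconn.nonempty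
  have : Nonempty ({x}ᶜ : Set V) := ⟨⟨y, (hy : T.Adj x y).ne'⟩⟩
  let f : V → ({x}ᶜ : Set V) := fun z => if hz : z = x then ⟨y, (hy : T.Adj x y).ne'⟩ else ⟨z, hz⟩
  refine .mk fun a b => ?_
  rw [← show f a = a from dif_neg a.2, ← show f b = b from dif_neg b.2]
  refine (hT.preconnected a b).lift f fun p q hpq => ?_
  rcases eq_or_ne p x with rfl | hp
  · simp only [f, dif_pos, dif_neg hpq.ne']
    exact healGraph_induce_reachable_of_adj hHconn hy hpq
  rcases eq_or_ne q x with rfl | hq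
  · simp only [f, dif_pos, dif_neg hp]
    exact healGraph_induce_reachable_of_adj hHconn hpq.symm hy
  · simp only [f, dif_neg hp, dif_neg hq]
    exact Adj.reachable (Or.inl ⟨hpq, hp, hq⟩)

/-- An `H`-edge `pq` is replaced by the path `p x q`, which avoids every edge of `T` not
incident to `x`. -/
lemma healGraph_induce_isBridge_of_tree_adj (hT : T.IsAcyclic)
    (hH : ∀ a b : V, H.Adj a b → a ∈ T.neighborSet x ∧ b ∈ T.neighborSet x)
    {a b : ({x}ᶜ : Set V)} (hab : T.Adj a b) :
    ((healGraph T x H).induce ({x}ᶜ : Set V)).IsBridge s(a, b) := by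
  refine isBridge_iff.mpr fun hreach => isBridge_iff.mp
    (isAcyclic_iff_forall_adj_isBridge.mp hT hab) (hreach.lift Subtype.val fun p q hpq => ?_)
  rw [deleteEdges_adj] at hpq
  obtain ⟨⟨hpq, -, -⟩ | hpq, hne⟩ := hpq
  · refine Adj.reachable (deleteEdges_adj.mpr ⟨hpq, fun h => hne ?_⟩)
    exact Sym2.map.injective Subtype.val_injective (by simpa using h)
  · have hpx : (T.deleteEdges {s(↑a, ↑b)}).Adj p x :=
      deleteEdges_adj.mpr ⟨(hH p q hpq).1.symm, by simp [Ne.symm a.2, Ne.symm b.2]⟩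
    have hxq : (T.deleteEdges {s(↑a, ↑b)}).Adj x q :=
      deleteEdges_adj.mpr ⟨(hH p q hpq).2, by simp [Ne.symm a.2, Ne.symm b.2]⟩
    exact hpx.reachable.trans hxq.reachable

/-- Sending each vertex to the neighbour of `x` on whose side of `x` it lies collapses every
edge of `T` not incident to `x` and turns the healed graph into `H`. -/
lemma healGraph_induce_isBridge_of_heal_adj (hT : T.IsTree)
    (hH : ∀ a b : V, H.Adj a b → a ∈ T.neighborSet x ∧ b ∈ T.neighborSet x)
    (hHacyc : (H.induce (T.neighborSet x)).IsAcyclic)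
    {a b : ({x}ᶜ : Set V)} (hab : H.Adj a b) :
    ((healGraph T x H).induce ({x}ᶜ : Set V)).IsBridge s(a, b) := by
  choose d hd hdz using fun z : ({x}ᶜ : Set V) => hT.connected.exists_adj_reachable_delVert z.2
  let D : ({x}ᶜ : Set V) → T.neighborSet x := fun z => ⟨d z, hd z⟩
  have hD : ∀ (z : ({x}ᶜ : Set V)) (hz : T.Adj x z), D z = ⟨z, hz⟩ := fun z hz =>
    Subtype.ext (hT.isAcyclic.eq_of_adj_of_reachable_delVert (hd z) hz (hdz z))
  obtain ⟨ha, hb⟩ := hH a b hab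
  refine isBridge_iff.mpr fun hreach => isBridge_iff.mp
    (isAcyclic_iff_forall_adj_isBridge.mp hHacyc
      (show (H.induce (T.neighborSet x)).Adj ⟨a, ha⟩ ⟨b, hb⟩ from hab)) ?_
  rw [← hD a ha, ← hD b hb]
  refine hreach.lift D fun p q hpq => ?_
  rw [deleteEdges_adj] at hpq
  obtain ⟨⟨hpq, hp, hq⟩ | hpq, hne⟩ := hpq
  · have hpq' : (delVert T x).Adj p q := ⟨hpq, hp, hq⟩
    rw [show D p = D q from Subtype.ext (hT.isAcyclic.eq_of_adj_of_reachable_delVert (hd p) (hd q)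
      (((hdz p).trans hpq'.reachable).trans (hdz q).symm))]
  · rw [hD p (hH p q hpq).1, hD q (hH p q hpq).2]
    refine Adj.reachable (deleteEdges_adj.mpr ⟨hpq, fun h => hne ?_⟩)
    simpa [Sym2.eq_iff, Subtype.ext_iff, hD a ha, hD b hb] using h

lemma healGraph_induce_isTree (hT : T.IsTree)
    (hH : ∀ a b : V, H.Adj a b → a ∈ T.neighborSet x ∧ b ∈ T.neighborSet x)
    (hHtree : (H.induce (T.neighborSet x)).IsTree) :
    ((healGraph T x H).induce ({x}ᶜ : Set V)).IsTree := by
  refine ⟨healGraph_induce_connected hT.connected hHtree.connected,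
    isAcyclic_iff_forall_adj_isBridge.mpr fun a b hab => ?_⟩
  rcases hab with ⟨hab, -, -⟩ | hab
  · exact healGraph_induce_isBridge_of_tree_adj hT.isAcyclic hH hab
  · exact healGraph_induce_isBridge_of_heal_adj hT hH hHtree.isAcyclic hab

lemma reachable_delVert_of_reachable_delVert_healGraph_induce
    (hH : ∀ a b : V, H.Adj a b → a ∈ T.neighborSet x ∧ b ∈ T.neighborSet x)
    {v a b : ({x}ᶜ : Set V)}
    (h : (delVert ((healGraph T x H).induce ({x}ᶜ : Set V)) v).Reachable a b) :
    (delVert T v).Reachable a b := by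
  refine h.lift Subtype.val fun p q hpq => ?_
  obtain ⟨hpq, hp, hq⟩ := hpq
  have hp : (p : V) ≠ v := Subtype.coe_ne_coe.mpr hp
  have hq : (q : V) ≠ v := Subtype.coe_ne_coe.mpr hq
  have hx : x ≠ v := Ne.symm v.2
  rcases hpq with ⟨hpq, -, -⟩ | hpq
  · exact (show (delVert T v).Adj p q from ⟨hpq, hp, hq⟩).reachable
  · exact (show (delVert T v).Adj p x from ⟨(hH p q hpq).1.symm, hp, hx⟩).reachable.trans
      (show (delVert T v).Adj x q from ⟨(hH p q hpq).2, hx, hq⟩).reachable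

end Heal

section Potential

variable {V : Type*} [Fintype V] {T H : SimpleGraph V} {x y : V} (w : V → NNReal)

open Classical in
lemma compW_delVert_healGraph_induce_le
    (hH : ∀ a b : V, H.Adj a b → a ∈ T.neighborSet x ∧ b ∈ T.neighborSet x)
    (hy : y ∈ T.neighborSet x) {u v : ({x}ᶜ : Set V)} (huv : u ≠ v) :
    compW (delVert ((healGraph T x H).induce ({x}ᶜ : Set V)) v)
        (fun z => Function.update w y (w y + w x) (z : V)) u
      ≤ compW (delVert T v) w u := by
  set A := (univ.filter ((delVert ((healGraph T x H).induce ({x}ᶜ : Set V)) v).Reachable u)).map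
    (Function.Embedding.subtype _)
  have hAB : A ⊆ univ.filter ((delVert T v).Reachable u) := by
    intro z hz
    obtain ⟨z', hz', rfl⟩ := mem_map.mp hz
    exact mem_filter.mpr ⟨mem_univ _,
      reachable_delVert_of_reachable_delVert_healGraph_induce hH (mem_filter.mp hz').2⟩
  have hxA : x ∉ A := fun hx => by
    obtain ⟨z, -, hz⟩ := mem_map.mp hx
    exact z.2 hz
  have hxB : y ∈ A → x ∈ univ.filter ((delVert T v).Reachable u) := fun hyA => by
    have huy := (mem_filter.mp (hAB hyA)).2
    have hyv : y ≠ v := by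
      rintro rfl
      exact huv (Subtype.ext (eq_of_reachable_delVert_self huy.symm))
    have hyx : (delVert T v).Adj y x := ⟨(hy : T.Adj x y).symm, hyv, Ne.symm v.2⟩
    exact mem_filter.mpr ⟨mem_univ _, huy.trans hyx.reachable⟩
  calc _ = ∑ z ∈ A, Function.update w y (w y + w x) z := by
          rw [compW, sum_map]
          congr 1
          ext
          simp
    _ ≤ _ := sum_update_add_le w hAB hxA hxB

open Classical in
lemma sup_compW_delVert_healGraph_induce_le (hT : T.Connected)
    (hH : ∀ a b : V, H.Adj a b → a ∈ T.neighborSet x ∧ b ∈ T.neighborSet x)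
    (hy : y ∈ T.neighborSet x) (v : ({x}ᶜ : Set V)) :
    (univ.filter (((healGraph T x H).induce ({x}ᶜ : Set V)).Adj v)).sup
        (compW (delVert ((healGraph T x H).induce ({x}ᶜ : Set V)) v)
          (fun z => Function.update w y (w y + w x) (z : V)))
      ≤ (univ.filter (T.Adj v)).sup (compW (delVert T v) w) := by
  refine Finset.sup_le fun u hu => ?_
  have huv : u ≠ v := (mem_filter.mp hu).2.ne'
  obtain ⟨u₀, hu₀, hr⟩ := hT.exists_adj_reachable_delVert (Subtype.coe_ne_coe.mpr huv)
  calc _ ≤ compW (delVert T v) w u := compW_delVert_healGraph_induce_le w hH hy huv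
    _ = compW (delVert T v) w u₀ := compW_eq_of_reachable w hr.symm
    _ ≤ _ := le_sup (mem_filter.mpr ⟨mem_univ _, hu₀⟩)

open Classical in
lemma sum_compl_singleton_update_add (hyx : y ≠ x) :
    ∑ z : ({x}ᶜ : Set V), Function.update w y (w y + w x) z = ∑ z, w z := by
  rw [← sum_subtype (univ.erase x) (by simp), sum_update_add_eq_sum_insert w (by simp)
    (by simp [hyx]), insert_erase (mem_univ x)]

end Potential

open Classical in
theorem rem_nondecreasing_over_heal_general
    {V : Type*} [Fintype V] (T : SimpleGraph V) (hT : T.IsTree)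
    (w : V → NNReal)
    (x : V)
    (H : SimpleGraph V)
    (hH : ∀ a b : V, H.Adj a b → a ∈ T.neighborSet x ∧ b ∈ T.neighborSet x)
    (hHtree : (H.induce (T.neighborSet x)).IsTree)
    (y : V) (hy : y ∈ T.neighborSet x) :
    ((healGraph T x H).induce ({x}ᶜ : Set V)).IsTree ∧
    ∀ v : ({x}ᶜ : Set V),
      rem T w (v : V) ≤
        rem ((healGraph T x H).induce ({x}ᶜ : Set V))
          (fun u => Function.update w y (w y + w x) (u : V)) v := by
  have hT' := healGraph_induce_isTree hT hH hHtree
  refine ⟨hT', fun v => ?_⟩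
  rw [hT.rem_eq, hT'.rem_eq, sum_compl_singleton_update_add w (hy : T.Adj x y).ne']
  exact tsub_le_tsub_left (sup_compW_delVert_healGraph_induce_le w hT.connected hH hy v) _

open Classical in
/-- after deleting `x` from the tree `T`, reconnecting its neighbors by a
tree `H` on `N(x)`, and transferring the weight of `x` to a neighbor `y` of `x`, the
resulting graph on `V \ {x}` is a tree, and `rem` does not decrease at any surviving
vertex. -/
theorem rem_nondecreasing_over_heal
    {V : Type*} [Fintype V] (T : SimpleGraph V) (hT : T.IsTree)
    (w : V → NNReal)
    (x : V) (hx : (T.neighborSet x).Nonempty)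
    (H : SimpleGraph V)
    (hH : ∀ a b : V, H.Adj a b → a ∈ T.neighborSet x ∧ b ∈ T.neighborSet x)
    (hHtree : (H.induce (T.neighborSet x)).IsTree)
    (y : V) (hy : y ∈ T.neighborSet x) :
    ((healGraph T x H).induce ({x}ᶜ : Set V)).IsTree ∧
    ∀ v : ({x}ᶜ : Set V),
      rem T w (v : V) ≤
        rem ((healGraph T x H).induce ({x}ᶜ : Set V))
          (fun u => Function.update w y (w y + w x) (u : V)) v :=
  rem_nondecreasing_over_heal_general T hT w x H hH hHtree y hy
end
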